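/- If u_* is a stationary solution of the Sinko–Streifer model on [0, x̄] with ∫_0^x̄ q(y)·u_*(y) dy ≠ 0, then the necessary condition ∫_0^x̄ (q(x)/g(x))·exp(−∫_0^x μ(s)/g(s) ds) dx = 1 holds. -/

import Mathlib

/-! The renewal integral of a stationary solution is `c * ∫ (q/g) exp(-∫ μ/g)` with
`c = g 0 * u 0`, and by the boundary condition it also equals `c`; cancelling `c ≠ 0` gives the
necessary condition. The closed form comes from the integrating factor `exp (∫₀ˣ μ/g)`, which makes
`(g u) · exp (∫₀ˣ μ/g)` have zero derivative on `[0, x̄]`. -/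

open MeasureTheory intervalIntegral

/-- A stationary solution of the Sinko–Streifer model on `[0, x̄]`. -/
def IsSinkoStationary (xbar : ℝ) (g μ q u : ℝ → ℝ) : Prop :=
  ContinuousOn u (Set.Icc 0 xbar) ∧
  (∀ x ∈ Set.Icc (0:ℝ) xbar,
    HasDerivWithinAt (fun y => g y * u y) (-(μ x * u x)) (Set.Icc 0 xbar) x) ∧
  g 0 * u 0 = ∫ y in (0:ℝ)..xbar, q y * u y

open Set

theorem eq_of_hasDerivWithinAt_Icc_zero {E : Type*} [NormedAddCommGroup E] [NormedSpace ℝ E]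
    {f : ℝ → E} {a b : ℝ} (hf : ∀ x ∈ Icc a b, HasDerivWithinAt f 0 (Icc a b) x) :
    ∀ x ∈ Icc a b, f x = f a :=
  constant_of_has_deriv_right_zero
    (fun x hx => (hf x hx).continuousWithinAt)
    (fun x hx => (hf x (Ico_subset_Icc_self hx)).mono_of_mem_nhdsWithin <|
      Filter.mem_of_superset (Icc_mem_nhdsGE hx.2) (Icc_subset_Icc_left hx.1))

theorem ContinuousOn.hasDerivWithinAt_integral_Icc {f : ℝ → ℝ} {a b x : ℝ}
    (hf : ContinuousOn f (Icc a b)) (hx : x ∈ Icc a b) :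
    HasDerivWithinAt (fun t => ∫ s in a..t, f s) (f x) (Icc a b) x := by
  have hab : a ≤ b := hx.1.trans hx.2
  set f' : ℝ → ℝ := fun s => f (projIcc a b hab s)
  have hf' : Continuous f' :=
    hf.comp_continuous (continuous_subtype_val.comp continuous_projIcc) fun s =>
      (projIcc a b hab s).2
  have hf'_eq : EqOn f' f (Icc a b) := fun s hs => by simp [f', projIcc_of_mem hab hs]
  have hint_eq : ∀ t ∈ Icc a b, ∫ s in a..t, f' s = ∫ s in a..t, f s := fun t ht =>
    integral_congr fun s hs => by
      rw [uIcc_of_le ht.1] at hs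
      exact hf'_eq ⟨hs.1, hs.2.trans ht.2⟩
  rw [← hf'_eq hx]
  exact (hf'.integral_hasStrictDerivAt a x).hasDerivAt.hasDerivWithinAt.congr
    (fun t ht => (hint_eq t ht).symm) (hint_eq x hx).symm

theorem eq_mul_exp_neg_integral_of_hasDerivWithinAt {v k : ℝ → ℝ} {a b : ℝ}
    (hk : ContinuousOn k (Icc a b))
    (hv : ∀ x ∈ Icc a b, HasDerivWithinAt v (-(k x * v x)) (Icc a b) x) :
    ∀ x ∈ Icc a b, v x = v a * Real.exp (-∫ s in a..x, k s) := by
  set Φ : ℝ → ℝ := fun x => v x * Real.exp (∫ s in a..x, k s)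
  have hΦ : ∀ x ∈ Icc a b, HasDerivWithinAt Φ 0 (Icc a b) x := fun x hx =>
    ((hv x hx).mul (hk.hasDerivWithinAt_integral_Icc hx).exp).congr_deriv (by ring)
  intro x hx
  have hΦx := eq_of_hasDerivWithinAt_Icc_zero hΦ x hx
  simp only [Φ, integral_same, Real.exp_zero, mul_one] at hΦx
  rw [← hΦx, Real.exp_neg, mul_inv_cancel_right₀ (Real.exp_ne_zero _)]

theorem sinko_streifer_necessary_condition_general
    (xbar : ℝ) (hxbar : 0 < xbar) (g μ q : ℝ → ℝ)
    (hg : ContinuousOn g (Set.Icc 0 xbar))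
    (hμ : ContinuousOn μ (Set.Icc 0 xbar))
    (hgpos : ∀ x ∈ Set.Icc (0:ℝ) xbar, 0 < g x)
    (u : ℝ → ℝ) (hu : IsSinkoStationary xbar g μ q u)
    (hne : (∫ y in (0:ℝ)..xbar, q y * u y) ≠ 0) :
    (∫ x in (0:ℝ)..xbar,
      (q x / g x) * Real.exp (-(∫ s in (0:ℝ)..x, μ s / g s))) = 1 := by
  obtain ⟨-, hode, hrenewal⟩ := hu
  have hgu : ∀ x ∈ Icc 0 xbar, g x * u x = g 0 * u 0 * Real.exp (-∫ s in (0:ℝ)..x, μ s / g s) :=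
    eq_mul_exp_neg_integral_of_hasDerivWithinAt (hμ.div hg fun x hx => (hgpos x hx).ne')
      fun x hx => by
        convert hode x hx using 2
        field_simp [(hgpos x hx).ne']
  have hrenewal_integral : (∫ y in (0:ℝ)..xbar, q y * u y) = g 0 * u 0 *
      ∫ x in (0:ℝ)..xbar, (q x / g x) * Real.exp (-(∫ s in (0:ℝ)..x, μ s / g s)) := by
    rw [← intervalIntegral.integral_const_mul]
    refine integral_congr fun x hx => ?_
    rw [uIcc_of_le hxbar.le] at hx
    calc q x * u x = q x / g x * (g x * u x) := by field_simp [(hgpos x hx).ne']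
      _ = _ := by rw [hgu x hx]; ring
  rw [← hrenewal] at hne
  exact (mul_eq_left₀ hne).mp (hrenewal_integral.symm.trans hrenewal.symm)

/-- If a stationary solution of the Sinko–Streifer model has nonzero renewal integral,
then the necessary condition (eq. (8) of the paper) holds. -/
theorem sinko_streifer_necessary_condition
    (xbar : ℝ) (hxbar : 0 < xbar) (g μ q : ℝ → ℝ)
    (hg : ContinuousOn g (Set.Icc 0 xbar))
    (hμ : ContinuousOn μ (Set.Icc 0 xbar))
    (hq : ContinuousOn q (Set.Icc 0 xbar))
    (hgpos : ∀ x ∈ Set.Icc (0:ℝ) xbar, 0 < g x)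
    (hμnn : ∀ x ∈ Set.Icc (0:ℝ) xbar, 0 ≤ μ x)
    (hqnn : ∀ x ∈ Set.Icc (0:ℝ) xbar, 0 ≤ q x)
    (u : ℝ → ℝ) (hu : IsSinkoStationary xbar g μ q u)
    (hne : (∫ y in (0:ℝ)..xbar, q y * u y) ≠ 0) :
    (∫ x in (0:ℝ)..xbar,
      (q x / g x) * Real.exp (-(∫ s in (0:ℝ)..x, μ s / g s))) = 1 :=
  sinko_streifer_necessary_condition_general xbar hxbar g μ q hg hμ hgpos u hu hne
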